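/- arXiv:2209.06551 — 2 statements merged into one kernel-verified Lean document; each statement's English description precedes it below -/
import Mathlib

section
/- Let (X, d) be a complex valued metric-like space and let x, y ∈ X be completely separate points, i.e. d(x,x) + d(y,y) ≺ d(x,y). Then there is no sequence {x_n} in X that converges (in the complex valued metric-like sense) to both x and y. -/
open Complex

/-- The partial order `z₁ ≾ z₂` on ℂ: `Re z₁ ≤ Re z₂` and `Im z₁ ≤ Im z₂`. -/
def CLe (z w : ℂ) : Prop := z.re ≤ w.re ∧ z.im ≤ w.im

/-- The strict relation `z₁ ≺ z₂` on ℂ: `Re z₁ < Re z₂` and `Im z₁ < Im z₂`. -/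
def CLt (z w : ℂ) : Prop := z.re < w.re ∧ z.im < w.im

/-- The complex absolute value `|z|_c = |Re z| + i |Im z|`. -/
noncomputable def cAbs (z : ℂ) : ℂ := (|z.re| : ℝ) + (|z.im| : ℝ) * Complex.I

/-- `d` is a complex valued metric-like on `X`. -/
def IsCVML {X : Type*} (d : X → X → ℂ) : Prop :=
  (∀ x y, CLe 0 (d x y)) ∧
  (∀ x y, d x y = 0 → x = y) ∧
  (∀ x y, d x y = d y x) ∧
  (∀ x y z, CLe (d x y) (d x z + d z y))

/-- The sequence `x` converges to `x₀` in the complex valued metric-like sense: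
for every `r ≻ 0` there is `N` with `|d(x n, x₀) - d(x₀, x₀)|_c ≺ r` for all `n > N`. -/
def CVMLConv {X : Type*} (d : X → X → ℂ) (x : ℕ → X) (x₀ : X) : Prop :=
  ∀ r : ℂ, CLt 0 r → ∃ N : ℕ, ∀ n > N, CLt (cAbs (d (x n) x₀ - d x₀ x₀)) r

/-- If `x` and `y` are completely separate points of a complex valued metric-like
space, no sequence converges to both of them. -/
theorem stmt_0 {X : Type*} [Nonempty X] (d : X → X → ℂ) (hd : IsCVML d)
    (x y : X) (hsep : CLt (d x x + d y y) (d x y)) :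
    ¬ ∃ s : ℕ → X, CVMLConv d s x ∧ CVMLConv d s y := by
  rintro ⟨s, hx, hy⟩
  obtain ⟨hpos, hzero, hsym, htri⟩ := hd
  set D : ℂ := d x y - d x x - d y y with hD
  have hDre : 0 < D.re := by
    have := hsep.1; simp only [hD, Complex.sub_re, Complex.add_re] at *; linarith
  have hDim : 0 < D.im := by
    have := hsep.2; simp only [hD, Complex.sub_im, Complex.add_im] at *; linarith
  set r : ℂ := (D.re / 2 : ℝ) + (D.im / 2 : ℝ) * Complex.I with hr
  have hrre : r.re = D.re / 2 := by simp [hr]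
  have hrim : r.im = D.im / 2 := by simp [hr]
  have hrpos : CLt 0 r := by
    constructor <;> simp [hrre, hrim] <;> [linarith; linarith]
  obtain ⟨N1, h1⟩ := hx r hrpos
  obtain ⟨N2, h2⟩ := hy r hrpos
  set n := max N1 N2 + 1 with hn
  have hn1 : n > N1 := lt_of_le_of_lt (le_max_left _ _) (Nat.lt_succ_self _)
  have hn2 : n > N2 := lt_of_le_of_lt (le_max_right _ _) (Nat.lt_succ_self _)
  have hx' := (h1 n hn1).1
  have hy' := (h2 n hn2).1
  simp only [cAbs, hrre, Complex.add_re, Complex.ofReal_re, Complex.mul_re,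
    Complex.ofReal_im, Complex.I_re, Complex.I_im] at hx' hy'
  -- hx' : |(d (s n) x - d x x).re| < D.re / 2 (up to junk)
  have hax : |(d (s n) x).re - (d x x).re| < D.re / 2 := by
    have : |(d (s n) x - d x x).re| < D.re / 2 := by linarith [hx']
    simpa [Complex.sub_re] using this
  have hay : |(d (s n) y).re - (d y y).re| < D.re / 2 := by
    have : |(d (s n) y - d y y).re| < D.re / 2 := by linarith [hy']
    simpa [Complex.sub_re] using this
  have htx : (d (s n) x).re < (d x x).re + D.re / 2 := by
    have := (abs_lt.mp hax).2; linarith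
  have hty : (d (s n) y).re < (d y y).re + D.re / 2 := by
    have := (abs_lt.mp hay).2; linarith
  have htr := (htri x y (s n)).1
  have hsyme : d x (s n) = d (s n) x := hsym x (s n)
  rw [Complex.add_re, hsyme] at htr
  have hDre' : D.re = (d x y).re - (d x x).re - (d y y).re := by
    simp [hD, Complex.sub_re]
  linarith
end

section
/- Let d : ℂ × ℂ → ℂ be defined by d(x, y) = i·max(|x|, |y|). Then the sequence x_n = i/n converges (in the complex valued metric-like sense) both to the point i and to the point 2i; in particular, i and 2i are quasi-equal points, and the limit of a convergent sequence in a complex valued metric-like space need not be unique. -/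
open Complex

/-!
In a metric-like space the self-distance `d(x₀, x₀)` need not vanish, and convergence only asks
`d(xₙ, x₀)` to approach it. For `d(x, y) = i·max(|x|, |y|)` we get `d(xₙ, x₀) = d(x₀, x₀) = i|x₀|`
exactly, as soon as `|xₙ| ≤ |x₀|`; since `|i/n| ≤ 1`, the sequence `i/n` converges to every point of
modulus at least `1`, in particular to `i` and to `2i`.
-/

open Filter

theorem cAbs_zero : cAbs 0 = 0 := by
  simp [cAbs]

theorem CVMLConv.of_eventually_eq {X : Type*} {d : X → X → ℂ} {x : ℕ → X} {x₀ : X}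
    (h : ∀ᶠ n in atTop, d (x n) x₀ = d x₀ x₀) : CVMLConv d x x₀ := by
  intro r hr
  obtain ⟨N, hN⟩ := eventually_atTop.1 h
  refine ⟨N, fun n hn => ?_⟩
  rwa [hN n hn.le, sub_self, cAbs_zero]

theorem cvmlConv_maxNorm_of_eventually_norm_le {x : ℕ → ℂ} {x₀ : ℂ}
    (h : ∀ᶠ n in atTop, ‖x n‖ ≤ ‖x₀‖) :
    CVMLConv (fun x y : ℂ => I * ((max ‖x‖ ‖y‖ : ℝ) : ℂ)) x x₀ :=
  CVMLConv.of_eventually_eq <| h.mono fun n hn => by simp only [max_eq_right hn, max_self]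

theorem eventually_norm_I_div_natCast_le_one : ∀ᶠ n : ℕ in atTop, ‖I / (n : ℂ)‖ ≤ 1 := by
  filter_upwards [eventually_ge_atTop 1] with n hn
  rw [norm_div, norm_I, norm_natCast]
  exact div_le_one_of_le₀ (by exact_mod_cast hn) n.cast_nonneg

/-- With `d(x, y) = i·max(|x|, |y|)` on `ℂ`, the sequence `xₙ = i/n` converges
both to `i` and to `2i`; hence `i` and `2i` are quasi-equal points and limits
of convergent sequences need not be unique. -/
theorem stmt_5 :
    CVMLConv (fun x y : ℂ => Complex.I * ((max ‖x‖ ‖y‖ : ℝ) : ℂ))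
      (fun n : ℕ => Complex.I / (n : ℂ)) Complex.I ∧
    CVMLConv (fun x y : ℂ => Complex.I * ((max ‖x‖ ‖y‖ : ℝ) : ℂ))
      (fun n : ℕ => Complex.I / (n : ℂ)) (2 * Complex.I) := by
  have h := eventually_norm_I_div_natCast_le_one
  refine ⟨cvmlConv_maxNorm_of_eventually_norm_le ?_, cvmlConv_maxNorm_of_eventually_norm_le ?_⟩
  · simpa only [norm_I] using h
  · have h2 : (1 : ℝ) ≤ ‖2 * I‖ := by norm_num
    exact h.mono fun n hn => hn.trans h2
end
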